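/- arXiv:2006.07841 — 2 statements merged into one kernel-verified Lean document; each statement's English description precedes it below -/
import Mathlib

section
/- Let Π be a diagonal (K+1)×(K+1) matrix with strictly positive diagonal entries π₁,…,π_{K+1}, and let P be a row-stochastic matrix with nonnegative entries satisfying Pᵀ·Π·P = Π. Then P is a permutation matrix, and P_{ij} = 1 with i ≠ j implies π_i = π_j. -/
open Matrix

/-- Core lemma behind Theorem 1 of CNI-CGAN: a nonnegative row-stochastic matrix `P`
satisfying `Pᵀ Π P = Π` for a positive diagonal `Π` is a permutation matrix, and any
off-diagonal `1` entry relates classes with equal priors. -/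
theorem row_stochastic_general_orthogonal_is_permutation
    (K : ℕ) (π : Fin (K + 1) → ℝ) (hπ : ∀ i, 0 < π i)
    (P : Matrix (Fin (K + 1)) (Fin (K + 1)) ℝ)
    (hnonneg : ∀ i j, 0 ≤ P i j) (hrow : ∀ i, ∑ j, P i j = 1)
    (horth : Pᵀ * (Matrix.diagonal π) * P = Matrix.diagonal π) :
    (∃ σ : Equiv.Perm (Fin (K + 1)),
        ∀ i j, P i j = if σ i = j then 1 else 0) ∧
    (∀ i j, i ≠ j → P i j = 1 → π i = π j) := by
  have E : ∀ j j', ∑ k, P k j * (π k * P k j') = Matrix.diagonal π j j' := by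
    intro j j'
    have := congrFun (congrFun horth j) j'
    rw [Matrix.mul_assoc] at this
    simpa [Matrix.mul_apply, Matrix.diagonal_apply, ite_mul, Matrix.transpose_apply] using this
  -- off-diagonal: products vanish
  have hzero : ∀ i j j', j ≠ j' → P i j * P i j' = 0 := by
    intro i j j' hne
    have h0 : ∑ k, P k j * (π k * P k j') = 0 := by
      rw [E j j', Matrix.diagonal_apply_ne _ hne]
    have hterm : ∀ k ∈ Finset.univ, (0:ℝ) ≤ P k j * (π k * P k j') := by
      intro k _
      exact mul_nonneg (hnonneg k j) (mul_nonneg (hπ k).le (hnonneg k j'))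
    have := (Finset.sum_eq_zero_iff_of_nonneg hterm).mp h0 i (Finset.mem_univ i)
    have hπi := (hπ i).ne'
    have : P i j * P i j' * π i = 0 := by ring_nf; ring_nf at this; linarith
    rcases mul_eq_zero.mp this with h | h
    · exact h
    · exact absurd h hπi
  -- each row has a nonzero entry
  have hex : ∀ i, ∃ j, P i j ≠ 0 := by
    intro i
    by_contra h
    push_neg at h
    have := hrow i
    simp [h] at this
  choose f hf using hex
  -- other entries in the row vanish
  have hz : ∀ i j, j ≠ f i → P i j = 0 := by
    intro i j hne
    rcases mul_eq_zero.mp (hzero i j (f i) hne) with h | h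
    · exact h
    · exact absurd h (hf i)
  -- the nonzero entry equals 1
  have hP : ∀ i j, P i j = if f i = j then 1 else 0 := by
    intro i j
    by_cases h : f i = j
    · subst h
      have := hrow i
      rw [Finset.sum_eq_single (f i) (fun b _ hb => hz i b hb) (by simp)] at this
      simp [this]
    · simp [h, hz i j (Ne.symm h)]
  -- diagonal equation in terms of f
  have Ediag : ∀ j, ∑ k, (if f k = j then π k else 0) = π j := by
    intro j
    have := E j j
    rw [Matrix.diagonal_apply_eq] at this
    rw [← this]
    apply Finset.sum_congr rfl
    intro k _
    rw [hP k j]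
    by_cases h : f k = j <;> simp [h]
  -- surjectivity of f
  have hsurj : Function.Surjective f := by
    intro j
    by_contra h
    push_neg at h
    have := Ediag j
    rw [Finset.sum_eq_zero (fun k _ => by simp [h k])] at this
    exact absurd this.symm (hπ j).ne'
  have hbij : Function.Bijective f := Finite.surjective_iff_bijective.mp hsurj
  refine ⟨⟨Equiv.ofBijective f hbij, fun i j => hP i j⟩, ?_⟩
  intro i j hne hPij
  have hfij : f i = j := by
    by_contra h
    rw [hP i j, if_neg h] at hPij
    norm_num at hPij
  have := Ediag j
  rw [Finset.sum_eq_single i (fun k _ hk => by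
        rw [if_neg]; intro hc; exact hk (hbij.1 (hc.trans hfij.symm)))
      (by simp)] at this
  rw [if_pos hfij] at this
  exact this
end

section
/- If all π₁,…,π_{K+1} are strictly positive and pairwise distinct, and P is a nonnegative row-stochastic (K+1)×(K+1) matrix with Pᵀ·Π·P = Π where Π = diag(π₁,…,π_{K+1}), then P is the identity matrix. -/
open Matrix

/-- When all class priors are strictly positive and pairwise distinct, the only
nonnegative row-stochastic matrix `P` with `Pᵀ Π P = Π` is the identity. -/
theorem distinct_priors_force_identity
    (K : ℕ) (π : Fin (K + 1) → ℝ) (hπ : ∀ i, 0 < π i)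
    (hdist : ∀ i j, i ≠ j → π i ≠ π j)
    (P : Matrix (Fin (K + 1)) (Fin (K + 1)) ℝ)
    (hnonneg : ∀ i j, 0 ≤ P i j) (hrow : ∀ i, ∑ j, P i j = 1)
    (horth : Pᵀ * (Matrix.diagonal π) * P = Matrix.diagonal π) :
    P = 1 := by
  -- entrywise form of the orthogonality condition
  have hth : ∀ i j, ∑ k, P k i * π k * P k j = Matrix.diagonal π i j := by
    intro i j
    have := congrFun (congrFun horth i) j
    rw [Matrix.mul_apply] at this
    simp only [Matrix.mul_diagonal, Matrix.transpose_apply] at this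
    exact this
  -- entries are at most 1
  have hle1 : ∀ k i, P k i ≤ 1 := by
    intro k i
    calc P k i ≤ ∑ j, P k j :=
          Finset.single_le_sum (fun j _ => hnonneg k j) (Finset.mem_univ i)
      _ = 1 := hrow k
  -- diagonal condition
  have hdiag : ∀ i, ∑ k, π k * (P k i * P k i) = π i := by
    intro i
    have := hth i i
    simp only [Matrix.diagonal_apply_eq] at this
    rw [← this]
    apply Finset.sum_congr rfl
    intro k _
    ring
  -- sum of squares in each row equals 1
  have hsq : ∀ k, ∑ i, P k i * P k i = 1 := by
    have htot : ∑ k, π k * (1 - ∑ i, P k i * P k i) = 0 := by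
      have h1 : ∑ i, ∑ k, π k * (P k i * P k i) = ∑ i, π i :=
        Finset.sum_congr rfl (fun i _ => hdiag i)
      rw [Finset.sum_comm] at h1
      have h2 : ∑ k, π k * (∑ i, P k i * P k i) = ∑ k, π k := by
        rw [← h1]
        exact Finset.sum_congr rfl (fun k _ => (Finset.mul_sum _ _ _))
      have : ∑ k, π k * (1 - ∑ i, P k i * P k i)
          = ∑ k, π k - ∑ k, π k * (∑ i, P k i * P k i) := by
        rw [← Finset.sum_sub_distrib]
        exact Finset.sum_congr rfl (fun k _ => by ring)
      rw [this, h2, sub_self]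
    have hnn : ∀ k ∈ Finset.univ, 0 ≤ π k * (1 - ∑ i, P k i * P k i) := by
      intro k _
      apply mul_nonneg (hπ k).le
      have : ∑ i, P k i * P k i ≤ ∑ i, P k i :=
        Finset.sum_le_sum (fun i _ => by
          nlinarith [hnonneg k i, hle1 k i])
      rw [hrow k] at this
      linarith
    intro k
    have := (Finset.sum_eq_zero_iff_of_nonneg hnn).mp htot k (Finset.mem_univ k)
    have hk := hπ k
    have : 1 - ∑ i, P k i * P k i = 0 := by
      rcases mul_eq_zero.mp this with h | h
      · exact absurd h hk.ne'
      · exact h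
    linarith
  -- all entries are 0 or 1
  have h01 : ∀ k i, P k i = 0 ∨ P k i = 1 := by
    intro k i
    have hz : ∑ i, (P k i - P k i * P k i) = 0 := by
      rw [Finset.sum_sub_distrib, hrow k, hsq k, sub_self]
    have hnn : ∀ i ∈ Finset.univ, 0 ≤ P k i - P k i * P k i := by
      intro i _
      nlinarith [hnonneg k i, hle1 k i]
    have := (Finset.sum_eq_zero_iff_of_nonneg hnn).mp hz i (Finset.mem_univ i)
    have : P k i * (1 - P k i) = 0 := by linarith
    rcases mul_eq_zero.mp this with h | h
    · exact Or.inl h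
    · exact Or.inr (by linarith)
  -- column equation
  have hcol : ∀ i, ∑ k, π k * P k i = π i := by
    intro i
    rw [← hdiag i]
    apply Finset.sum_congr rfl
    intro k _
    rcases h01 k i with h | h <;> rw [h] <;> ring
  -- each row has a 1 somewhere
  have hone : ∀ i, ∃ c, P i c = 1 := by
    intro i
    by_contra h
    push_neg at h
    have hz : ∀ c, P i c = 0 := fun c => (h01 i c).resolve_right (h c)
    have := hrow i
    simp [hz] at this
  -- key: P i i = 1, by strong induction on the number of larger priors
  have key : ∀ n i, (Finset.univ.filter (fun j => π i < π j)).card ≤ n → P i i = 1 := by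
    intro n
    induction n with
    | zero =>
        intro i hcard
        obtain ⟨c, hc⟩ := hone i
        -- π c ≥ π i
        have hge : π i ≤ π c := by
          have : π i * P i c ≤ ∑ k, π k * P k c :=
            Finset.single_le_sum
              (fun k _ => mul_nonneg (hπ k).le (hnonneg k c)) (Finset.mem_univ i)
          rw [hc, mul_one, hcol c] at this
          exact this
        rcases eq_or_lt_of_le hge with heq | hlt
        · have : c = i := by
            by_contra hne
            exact hdist i c (fun h => hne h.symm) heq
          rwa [this] at hc
        · exfalso
          have : c ∈ Finset.univ.filter (fun j => π i < π j) := by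
            simp [hlt]
          have := Finset.card_pos.mpr ⟨c, this⟩
          omega
    | succ n ih =>
        intro i hcard
        obtain ⟨c, hc⟩ := hone i
        have hge : π i ≤ π c := by
          have : π i * P i c ≤ ∑ k, π k * P k c :=
            Finset.single_le_sum
              (fun k _ => mul_nonneg (hπ k).le (hnonneg k c)) (Finset.mem_univ i)
          rw [hc, mul_one, hcol c] at this
          exact this
        rcases eq_or_lt_of_le hge with heq | hlt
        · have : c = i := by
            by_contra hne
            exact hdist i c (fun h => hne h.symm) heq
          rwa [this] at hc
        · exfalso
          -- c has strictly fewer larger priors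
          have hsub : (Finset.univ.filter (fun j => π c < π j)) ⊂
              (Finset.univ.filter (fun j => π i < π j)) := by
            constructor
            · intro x hx
              simp only [Finset.mem_filter, Finset.mem_univ, true_and] at hx ⊢
              linarith
            · intro hsub'
              have : c ∈ Finset.univ.filter (fun j => π c < π j) := by
                apply hsub'
                simp [hlt]
              simp at this
          have hcard' : (Finset.univ.filter (fun j => π c < π j)).card ≤ n := by
            have := Finset.card_lt_card hsub
            omega
          have hcc : P c c = 1 := ih c hcard'
          have hne : i ≠ c := fun h => absurd (h ▸ rfl) hlt.ne
          -- column c sum is at least π c + π i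
          have hbig : π c + π i ≤ ∑ k, π k * P k c := by
            have hsub2 : ({c, i} : Finset (Fin (K + 1))) ⊆ Finset.univ :=
              Finset.subset_univ _
            have hpair : ∑ k ∈ ({c, i} : Finset (Fin (K + 1))), π k * P k c
                = π c + π i := by
              rw [Finset.sum_pair (fun h => hne h.symm)]
              rw [hc, hcc, mul_one, mul_one]
            calc π c + π i = ∑ k ∈ ({c, i} : Finset (Fin (K + 1))), π k * P k c :=
                  hpair.symm
              _ ≤ ∑ k, π k * P k c :=
                  Finset.sum_le_sum_of_subset_of_nonneg hsub2
                    (fun k _ _ => mul_nonneg (hπ k).le (hnonneg k c))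
          rw [hcol c] at hbig
          have := hπ i
          linarith
  have hdiag1 : ∀ i, P i i = 1 := fun i =>
    key (Finset.univ.filter (fun j => π i < π j)).card i le_rfl
  -- conclude
  ext i j
  by_cases h : i = j
  · subst h
    simp [hdiag1 i]
  · have hz : ∑ k ∈ (Finset.univ.erase i), P i k = 0 := by
      have := hrow i
      rw [← Finset.add_sum_erase _ _ (Finset.mem_univ i), hdiag1 i] at this
      linarith
    have := (Finset.sum_eq_zero_iff_of_nonneg
      (fun k _ => hnonneg i k)).mp hz j (by simp [Ne.symm h])
    simp [this, Matrix.one_apply, h]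
end
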